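/- In the convex setting (CP) with κ = 1, assume additionally that f is α-strongly convex for some α > 0. Let x* ∈ 𝒳 be an optimal solution, let x⁰ ∈ 𝒳 be feasible, and suppose for every k ≥ 0 there exist μ^{k+1} ∈ ℝ^m_{≥0} with ‖μ^{k+1}‖_∞ ≤ B and l^{k+1} ∈ ∂r(x^{k+1}) such that x^{k+1}, μ^{k+1}, l^{k+1} satisfy the GHMA subproblem KKT conditions at x^k. Set L_B := L + B·Σ_{i=1}^m L_i and ρ := 1 − α/L_B, and assume α ≤ L_B. Then for every K ≥ 1: (α/2)‖x^K − x*‖² + (1 − ρ^K)·(F(x^K) − F(x*)) ≤ (α·ρ^K/2)·‖x⁰ − x*‖². -/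

import Mathlib

open scoped RealInnerProductSpace
open Real Set

/-- The convex subdifferential of `r` at `u`. -/
def subgrad {n : ℕ} (r : EuclideanSpace ℝ (Fin n) → ℝ)
    (u : EuclideanSpace ℝ (Fin n)) : Set (EuclideanSpace ℝ (Fin n)) :=
  {l | ∀ z, r u + ⟪l, z - u⟫ ≤ r z}

/-!
The KKT conditions of a GHMA step, combined with the descent lemma for `f`, strong convexity of
`f` at `xᵏ`, convexity of the `cᵢ`, complementary slackness and the subgradient inequality for `r`,
give a three-point inequality: for every feasible `z ∈ X`,
`2 (F xᵏ⁺¹ - F z) + Lₖ ‖xᵏ⁺¹ - z‖² ≤ (Lₖ - α) ‖xᵏ - z‖²` with `Lₖ = L + ∑ᵢ μᵢᵏ⁺¹ Lᵢ ≤ L_B`.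
The iterates stay feasible by the descent lemma for the `cᵢ`, so `z = xᵏ` shows that `F` decreases
along them, while `z = x*` gives the one-step contraction
`(α/2) ‖xᵏ⁺¹ - x*‖² + (1 - ρ) (F xᵏ⁺¹ - F x*) ≤ ρ (α/2) ‖xᵏ - x*‖²`;
unrolling it, with the monotonicity of `F`, yields the rate.
-/

section Gradient

variable {E : Type*} [NormedAddCommGroup E] [InnerProductSpace ℝ E] [CompleteSpace E]
  {φ : E → ℝ} {g : E} {a b : E}

theorem HasGradientAt.hasDerivAt_comp_lineMap {t : ℝ}
    (h : HasGradientAt φ g (AffineMap.lineMap a b t)) :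
    HasDerivAt (fun s : ℝ => φ (AffineMap.lineMap a b s)) ⟪g, b - a⟫ t := by
  have := h.hasFDerivAt.comp_hasDerivAt t (AffineMap.hasDerivAt_lineMap (a := a) (b := b))
  simp only [InnerProductSpace.toDual_apply_apply] at this
  exact this

theorem ConvexOn.add_inner_gradient_le (hφ : ConvexOn ℝ univ φ) (h : HasGradientAt φ g a)
    (b : E) : φ a + ⟪g, b - a⟫ ≤ φ b := by
  have hline : ConvexOn ℝ univ (fun s : ℝ => φ (AffineMap.lineMap a b s)) :=
    hφ.comp_affineMap (AffineMap.lineMap a b)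
  have hderiv := HasGradientAt.hasDerivAt_comp_lineMap (b := b) (t := 0) (by simpa using h)
  have := hline.le_slope_of_hasDerivAt (mem_univ 0) (mem_univ 1) one_pos hderiv
  simp only [slope_def_field, AffineMap.lineMap_apply_one, AffineMap.lineMap_apply_zero, sub_zero,
    div_one] at this
  linarith

theorem le_add_inner_gradient_add_sq_of_lipschitz {φ' : E → E} {M : ℝ}
    (hφ : ∀ y, HasGradientAt φ (φ' y) y) (hlip : ∀ y z, ‖φ' y - φ' z‖ ≤ M * ‖y - z‖)
    (a b : E) : φ b ≤ φ a + ⟪φ' a, b - a⟫ + M / 2 * ‖b - a‖ ^ 2 := by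
  set v := b - a
  have hderiv (t : ℝ) := (hφ (AffineMap.lineMap a b t)).hasDerivAt_comp_lineMap
  have hbound (t : ℝ) : HasDerivAt (fun s : ℝ => φ a + s * ⟪φ' a, v⟫ + M / 2 * s ^ 2 * ‖v‖ ^ 2)
      (⟪φ' a, v⟫ + M * t * ‖v‖ ^ 2) t := by
    have hlin := ((hasDerivAt_id' t).mul_const ⟪φ' a, v⟫).const_add (φ a)
    have hquad := ((hasDerivAt_pow 2 t).const_mul (M / 2)).mul_const (‖v‖ ^ 2)
    exact (hlin.add hquad).congr_deriv (by push_cast; ring)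
  have key := image_le_of_deriv_right_le_deriv_boundary
    (fun t _ => (hderiv t).continuousAt.continuousWithinAt)
    (fun t _ => (hderiv t).hasDerivWithinAt) (by simp)
    (fun t _ => (hbound t).continuousAt.continuousWithinAt)
    (fun t _ => (hbound t).hasDerivWithinAt) (fun t ht => ?_) (right_mem_Icc.2 zero_le_one)
  · simpa using key
  have hdist : ‖AffineMap.lineMap a b t - a‖ = t * ‖v‖ := by
    rw [← vsub_eq_sub, AffineMap.lineMap_vsub_left, norm_smul, Real.norm_of_nonneg ht.1]; rfl
  calc ⟪φ' (AffineMap.lineMap a b t), v⟫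
      = ⟪φ' a, v⟫ + ⟪φ' (AffineMap.lineMap a b t) - φ' a, v⟫ := by rw [inner_sub_left]; ring
    _ ≤ ⟪φ' a, v⟫ + M * (t * ‖v‖) * ‖v‖ := by
        gcongr
        exact (real_inner_le_norm _ _).trans
          (mul_le_mul_of_nonneg_right (hdist ▸ hlip _ _) (norm_nonneg _))
    _ = ⟪φ' a, v⟫ + M * t * ‖v‖ ^ 2 := by ring

end Gradient

section GHMAStep

variable {E ι : Type*} [NormedAddCommGroup E] [InnerProductSpace ℝ E] [Fintype ι]
  {f r : E → ℝ} {c : ι → E → ℝ} {f' l p q z : E} {c' : ι → E} {L α : ℝ} {Li μ : ι → ℝ}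

theorem ghma_step_three_point
    (hfq : f q ≤ f p + ⟪f', q - p⟫ + L / 2 * ‖q - p‖ ^ 2)
    (hfz : f p + ⟪f', z - p⟫ + α / 2 * ‖z - p‖ ^ 2 ≤ f z)
    (hrz : r q + ⟪l, z - q⟫ ≤ r z)
    (hcz : ∀ i, c i p + ⟪c' i, z - p⟫ ≤ 0)
    (hstat : 0 ≤ ⟪f' + L • (q - p) + (∑ i, μ i • (c' i + Li i • (q - p))) + l, z - q⟫)
    (hμ : ∀ i, 0 ≤ μ i)
    (hcomp : ∀ i, μ i * (c i p + ⟪c' i, q - p⟫ + Li i / 2 * ‖q - p‖ ^ 2) = 0) :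
    2 * (f q + r q - (f z + r z)) + (L + ∑ i, μ i * Li i) * ‖q - z‖ ^ 2 ≤
      (L + ∑ i, μ i * Li i - α) * ‖p - z‖ ^ 2 := by
  rw [norm_sub_rev z p] at hfz
  have hsplit (v : E) : ⟪v, z - q⟫ = ⟪v, z - p⟫ - ⟪v, q - p⟫ := by
    rw [← inner_sub_right, sub_sub_sub_cancel_right]
  have hexpand : ⟪f' + L • (q - p) + (∑ i, μ i • (c' i + Li i • (q - p))) + l, z - q⟫ =
      ⟪f', z - p⟫ - ⟪f', q - p⟫ + (L + ∑ i, μ i * Li i) * ⟪q - p, z - q⟫ +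
        ∑ i, μ i * ⟪c' i, z - q⟫ + ⟪l, z - q⟫ := by
    simp only [inner_add_left, sum_inner, real_inner_smul_left, mul_add, add_mul,
      Finset.sum_add_distrib, Finset.sum_mul, mul_assoc, hsplit f']
    ring
  -- each active constraint contributes at most `μᵢ Lᵢ ‖q - p‖² / 2`, by complementary slackness
  have hconstr : ∑ i, μ i * ⟪c' i, z - q⟫ ≤ (∑ i, μ i * Li i) * (‖q - p‖ ^ 2 / 2) := by
    rw [Finset.sum_mul]
    refine Finset.sum_le_sum fun i _ => ?_
    rw [hsplit]
    linear_combination mul_le_mul_of_nonneg_left (hcz i) (hμ i) - hcomp i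
  have hthree : 2 * ⟪q - p, z - q⟫ = ‖p - z‖ ^ 2 - ‖q - z‖ ^ 2 - ‖q - p‖ ^ 2 := by
    rw [show p - z = -((q - p) + (z - q)) by abel, norm_neg, norm_add_sq_real, norm_sub_rev z q]
    ring
  linear_combination 2 * hstat + 2 * hfq + 2 * hfz + 2 * hrz + 2 * hconstr
    + (L + ∑ i, μ i * Li i) * hthree + 2 * hexpand

end GHMAStep

theorem contraction_of_three_point {α c M δ e₀ e₁ : ℝ} (hα : 0 ≤ α) (hc : 0 < c) (hcM : c ≤ M)
    (hδ : 0 ≤ δ) (he₀ : 0 ≤ e₀) (h : 2 * δ + c * e₁ ≤ (c - α) * e₀) :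
    α / 2 * e₁ + (1 - (1 - α / M)) * δ ≤ (1 - α / M) * (α / 2 * e₀) := by
  have hM : 0 < M := hc.trans_le hcM
  have hM_step : 2 * δ + M * e₁ ≤ (M - α) * e₀ := by
    refine le_of_mul_le_mul_left ?_ hc
    nlinarith [mul_le_mul_of_nonneg_left h hM.le, mul_nonneg hδ (sub_nonneg.2 hcM),
      mul_nonneg (mul_nonneg hα he₀) (sub_nonneg.2 hcM)]
  field_simp
  nlinarith [mul_le_mul_of_nonneg_left hM_step hα]

theorem linear_rate_of_contraction {ρ : ℝ} {a δ : ℕ → ℝ} (hρ₀ : 0 ≤ ρ) (hρ₁ : ρ ≤ 1)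
    (hδ : ∀ k, δ (k + 1) ≤ δ k) (hstep : ∀ k, a (k + 1) + (1 - ρ) * δ (k + 1) ≤ ρ * a k)
    (K : ℕ) : a K + (1 - ρ ^ K) * δ K ≤ ρ ^ K * a 0 := by
  induction K with
  | zero => simp
  | succ K ih =>
    have hcoef : 0 ≤ ρ * (1 - ρ ^ K) := mul_nonneg hρ₀ (sub_nonneg.2 (pow_le_one₀ hρ₀ hρ₁))
    rw [pow_succ']
    linarith [hstep K, mul_le_mul_of_nonneg_left (hδ K) hcoef, mul_le_mul_of_nonneg_left ih hρ₀]

theorem ghma_strongly_convex_rate_general {n m : ℕ}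
    (X : Set (EuclideanSpace ℝ (Fin n)))
    (f r : EuclideanSpace ℝ (Fin n) → ℝ)
    (c : Fin m → EuclideanSpace ℝ (Fin n) → ℝ)
    (f' : EuclideanSpace ℝ (Fin n) → EuclideanSpace ℝ (Fin n))
    (c' : Fin m → EuclideanSpace ℝ (Fin n) → EuclideanSpace ℝ (Fin n))
    (hf : ∀ x, HasGradientAt f (f' x) x)
    (hc : ∀ i x, HasGradientAt (c i) (c' i x) x)
    (hcconv : ∀ i, ConvexOn ℝ univ (c i))
    (L : ℝ) (Li : Fin m → ℝ) (hL : 0 < L) (hLi : ∀ i, 0 < Li i)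
    -- Lipschitz gradients (Hölder continuity with κ = 1)
    (hflip : ∀ x y, ‖f' x - f' y‖ ≤ L * ‖x - y‖)
    (hclip : ∀ i x y, ‖c' i x - c' i y‖ ≤ Li i * ‖x - y‖)
    -- α-strong convexity of f
    (α : ℝ) (hα : 0 < α)
    (hsconv : ∀ y z, f y + ⟪f' y, z - y⟫ + (α / 2) * ‖z - y‖ ^ 2 ≤ f z)
    -- the optimal solution
    (xstar : EuclideanSpace ℝ (Fin n)) (hxstarX : xstar ∈ X)
    (hxstarfeas : ∀ i, c i xstar ≤ 0)
    (hxstaropt : ∀ z ∈ X, (∀ i, c i z ≤ 0) → f xstar + r xstar ≤ f z + r z)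
    -- the iterates, their multipliers and subgradients
    (x : ℕ → EuclideanSpace ℝ (Fin n)) (hxX : ∀ k, x k ∈ X)
    (hx0feas : ∀ i, c i (x 0) ≤ 0)
    (B : ℝ)
    (μ : ℕ → Fin m → ℝ) (l : ℕ → EuclideanSpace ℝ (Fin n))
    (hμpos : ∀ k i, 0 ≤ μ (k + 1) i) (hμB : ∀ k i, μ (k + 1) i ≤ B)
    (hl : ∀ k, l (k + 1) ∈ subgrad r (x (k + 1)))
    -- GHMA subproblem (κ = 1) KKT conditions at x^k, satisfied by x^{k+1}, μ^{k+1}, l^{k+1}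
    (hstat : ∀ k, ∀ z ∈ X, 0 ≤
      ⟪f' (x k) + L • (x (k + 1) - x k) +
        (∑ i, μ (k + 1) i • (c' i (x k) + Li i • (x (k + 1) - x k))) + l (k + 1),
        z - x (k + 1)⟫)
    (hconstr : ∀ k i, c i (x k) + ⟪c' i (x k), x (k + 1) - x k⟫ +
      (Li i / 2) * ‖x (k + 1) - x k‖ ^ 2 ≤ 0)
    (hcomp : ∀ k i, μ (k + 1) i * (c i (x k) + ⟪c' i (x k), x (k + 1) - x k⟫ +
      (Li i / 2) * ‖x (k + 1) - x k‖ ^ 2) = 0)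
    -- α ≤ L_B
    (hαLB : α ≤ L + B * ∑ i, Li i) :
    ∀ K : ℕ, 1 ≤ K →
      (α / 2) * ‖x K - xstar‖ ^ 2 +
        (1 - (1 - α / (L + B * ∑ i, Li i)) ^ K) *
          ((f (x K) + r (x K)) - (f xstar + r xstar)) ≤
      (α * (1 - α / (L + B * ∑ i, Li i)) ^ K / 2) * ‖x 0 - xstar‖ ^ 2 := by
  intro K _
  have hLB : 0 < L + B * ∑ i, Li i := hα.trans_le hαLB
  have hfeas : ∀ k i, c i (x k) ≤ 0 := by
    rintro (_ | k) i
    · exact hx0feas i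
    · exact (le_add_inner_gradient_add_sq_of_lipschitz (hc i) (hclip i) _ _).trans (hconstr k i)
  have hstep (k : ℕ) (z : EuclideanSpace ℝ (Fin n)) (hz : z ∈ X) (hcz : ∀ i, c i z ≤ 0) :=
    ghma_step_three_point (c' := fun i => c' i (x k)) (μ := μ (k + 1))
      (le_add_inner_gradient_add_sq_of_lipschitz hf hflip (x k) (x (k + 1))) (hsconv (x k) z)
      (hl k z) (fun i => ((hcconv i).add_inner_gradient_le (hc i (x k)) z).trans (hcz i))
      (hstat k z hz) (hμpos k) (hcomp k)
  have hLμ_pos (k : ℕ) : 0 < L + ∑ i, μ (k + 1) i * Li i :=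
    add_pos_of_pos_of_nonneg hL (Finset.sum_nonneg fun i _ => mul_nonneg (hμpos k i) (hLi i).le)
  have hLμ_le (k : ℕ) : L + ∑ i, μ (k + 1) i * Li i ≤ L + B * ∑ i, Li i := by
    rw [Finset.mul_sum]
    gcongr with i
    exacts [(hLi i).le, hμB k i]
  have hmono (k : ℕ) : f (x (k + 1)) + r (x (k + 1)) ≤ f (x k) + r (x k) := by
    have := hstep k (x k) (hxX k) (hfeas k)
    rw [sub_self, norm_zero] at this
    nlinarith [mul_nonneg (hLμ_pos k).le (sq_nonneg ‖x (k + 1) - x k‖)]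
  have hrate := linear_rate_of_contraction (a := fun k => α / 2 * ‖x k - xstar‖ ^ 2)
    (δ := fun k => f (x k) + r (x k) - (f xstar + r xstar))
    (sub_nonneg.2 (div_le_one_of_le₀ hαLB hLB.le)) (sub_le_self _ (div_pos hα hLB).le)
    (fun k => sub_le_sub_right (hmono k) _)
    (fun k => contraction_of_three_point hα.le (hLμ_pos k) (hLμ_le k)
      (sub_nonneg.2 (hxstaropt _ (hxX (k + 1)) (hfeas (k + 1)))) (sq_nonneg _)
      (hstep k xstar hxstarX hxstarfeas)) K
  linarith

/-- (Theorem 4 in the paper: linear convergence of GHMA in the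
strongly convex Lipschitz case `κ = 1`.)  With `L_B = L + BΣᵢLᵢ`, `ρ = 1 − α/L_B`,
for every `K ≥ 1`:
`(α/2)‖x^K − x*‖² + (1 − ρ^K)(F(x^K) − F(x*)) ≤ (αρ^K/2)‖x⁰ − x*‖²`. -/
theorem ghma_strongly_convex_rate {n m : ℕ}
    (X : Set (EuclideanSpace ℝ (Fin n))) (hXconv : Convex ℝ X) (hXclosed : IsClosed X)
    (f r : EuclideanSpace ℝ (Fin n) → ℝ)
    (c : Fin m → EuclideanSpace ℝ (Fin n) → ℝ)
    (f' : EuclideanSpace ℝ (Fin n) → EuclideanSpace ℝ (Fin n))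
    (c' : Fin m → EuclideanSpace ℝ (Fin n) → EuclideanSpace ℝ (Fin n))
    (hf : ∀ x, HasGradientAt f (f' x) x)
    (hc : ∀ i x, HasGradientAt (c i) (c' i x) x)
    (hfconv : ConvexOn ℝ univ f) (hcconv : ∀ i, ConvexOn ℝ univ (c i))
    (hrconv : ConvexOn ℝ univ r)
    (L : ℝ) (Li : Fin m → ℝ) (hL : 0 < L) (hLi : ∀ i, 0 < Li i)
    -- Lipschitz gradients (Hölder continuity with κ = 1)
    (hflip : ∀ x y, ‖f' x - f' y‖ ≤ L * ‖x - y‖)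
    (hclip : ∀ i x y, ‖c' i x - c' i y‖ ≤ Li i * ‖x - y‖)
    -- α-strong convexity of f
    (α : ℝ) (hα : 0 < α)
    (hsconv : ∀ y z, f y + ⟪f' y, z - y⟫ + (α / 2) * ‖z - y‖ ^ 2 ≤ f z)
    -- the optimal solution
    (xstar : EuclideanSpace ℝ (Fin n)) (hxstarX : xstar ∈ X)
    (hxstarfeas : ∀ i, c i xstar ≤ 0)
    (hxstaropt : ∀ z ∈ X, (∀ i, c i z ≤ 0) → f xstar + r xstar ≤ f z + r z)
    -- the iterates, their multipliers and subgradients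
    (x : ℕ → EuclideanSpace ℝ (Fin n)) (hxX : ∀ k, x k ∈ X)
    (hx0feas : ∀ i, c i (x 0) ≤ 0)
    (B : ℝ) (hB : 0 ≤ B)
    (μ : ℕ → Fin m → ℝ) (l : ℕ → EuclideanSpace ℝ (Fin n))
    (hμpos : ∀ k i, 0 ≤ μ (k + 1) i) (hμB : ∀ k i, μ (k + 1) i ≤ B)
    (hl : ∀ k, l (k + 1) ∈ subgrad r (x (k + 1)))
    -- GHMA subproblem (κ = 1) KKT conditions at x^k, satisfied by x^{k+1}, μ^{k+1}, l^{k+1}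
    (hstat : ∀ k, ∀ z ∈ X, 0 ≤
      ⟪f' (x k) + L • (x (k + 1) - x k) +
        (∑ i, μ (k + 1) i • (c' i (x k) + Li i • (x (k + 1) - x k))) + l (k + 1),
        z - x (k + 1)⟫)
    (hconstr : ∀ k i, c i (x k) + ⟪c' i (x k), x (k + 1) - x k⟫ +
      (Li i / 2) * ‖x (k + 1) - x k‖ ^ 2 ≤ 0)
    (hcomp : ∀ k i, μ (k + 1) i * (c i (x k) + ⟪c' i (x k), x (k + 1) - x k⟫ +
      (Li i / 2) * ‖x (k + 1) - x k‖ ^ 2) = 0)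
    -- α ≤ L_B
    (hαLB : α ≤ L + B * ∑ i, Li i) :
    ∀ K : ℕ, 1 ≤ K →
      (α / 2) * ‖x K - xstar‖ ^ 2 +
        (1 - (1 - α / (L + B * ∑ i, Li i)) ^ K) *
          ((f (x K) + r (x K)) - (f xstar + r xstar)) ≤
      (α * (1 - α / (L + B * ∑ i, Li i)) ^ K / 2) * ‖x 0 - xstar‖ ^ 2 :=
  ghma_strongly_convex_rate_general X f r c f' c' hf hc hcconv L Li hL hLi hflip hclip α hα hsconv
    xstar hxstarX hxstarfeas hxstaropt x hxX hx0feas B μ l hμpos hμB hl hstat hconstr hcomp hαLB
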